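/- arXiv:2412.11796 — 10 statements merged into one kernel-verified Lean document; each statement's English description precedes it below -/
import Mathlib

section
/- Let V and W be finite-dimensional real inner product spaces and d : V → W linear. Suppose for all u ∈ V orthogonal to ker(d) one has ‖u‖ ≤ C·‖d u‖ with C > 0. Then for every t in range(d) there exists v ∈ V with ⟨t, d v⟩ ≥ (1/C)·‖v‖·‖t‖, i.e. the inf-sup condition inf_{t ∈ range(d)} sup_{v ∈ V} ⟨t, d v⟩/(‖t‖·‖v‖) ≥ 1/C holds. -/
/-!
Subtracting from `v₀` its orthogonal projection onto `ker d` gives a preimage `v ⊥ ker d` of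
`t = d v₀`. Testing `t` against this `v`, the Poincaré inequality `‖v‖ ≤ C ‖t‖` yields
`⟪t, d v⟫ = ‖t‖² ≥ ‖v‖ ‖t‖ / C`.
-/

open scoped RealInnerProductSpace

theorem LinearMap.exists_mem_orthogonal_ker_apply_eq {𝕜 E F : Type*} [RCLike 𝕜]
    [NormedAddCommGroup E] [InnerProductSpace 𝕜 E] [AddCommGroup F] [Module 𝕜 F]
    (d : E →ₗ[𝕜] F) [(LinearMap.ker d).HasOrthogonalProjection] (v₀ : E) :
    ∃ v ∈ (LinearMap.ker d)ᗮ, d v = d v₀ := by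
  refine ⟨v₀ - (LinearMap.ker d).starProjection v₀,
    (LinearMap.ker d).sub_starProjection_mem_orthogonal v₀, ?_⟩
  rw [map_sub, LinearMap.mem_ker.mp ((LinearMap.ker d).starProjection_apply_mem v₀), sub_zero]

theorem div_mul_norm_mul_norm_le_inner_self {E : Type*} [NormedAddCommGroup E]
    [InnerProductSpace ℝ E] {F : Type*} [NormedAddCommGroup F] {C : ℝ} (hC : 0 < C)
    {v : F} {t : E} (h : ‖v‖ ≤ C * ‖t‖) : 1 / C * ‖v‖ * ‖t‖ ≤ ⟪t, t⟫ := by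
  rw [real_inner_self_eq_norm_mul_norm]
  gcongr
  rw [one_div_mul_eq_div, div_le_iff₀ hC, mul_comm]
  exact h

theorem poincare_implies_inf_sup_general
    {V W : Type*} [NormedAddCommGroup V] [InnerProductSpace ℝ V]
    [NormedAddCommGroup W] [InnerProductSpace ℝ W]
    [FiniteDimensional ℝ V]
    (d : V →ₗ[ℝ] W) (C : ℝ) (hC : 0 < C)
    (hP : ∀ u : V, (∀ v : V, d v = 0 → ⟪u, v⟫ = 0) → ‖u‖ ≤ C * ‖d u‖) :
    ∀ t ∈ Set.range d, t ≠ 0 →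
      ∃ v : V, v ≠ 0 ∧ ⟪t, d v⟫ ≥ (1 / C) * ‖v‖ * ‖t‖ := by
  rintro t ⟨v₀, rfl⟩ ht
  obtain ⟨v, hv_perp, hdv⟩ := d.exists_mem_orthogonal_ker_apply_eq v₀
  have hpoincare : ‖v‖ ≤ C * ‖d v₀‖ :=
    hdv ▸ hP v fun u hu => (Submodule.mem_orthogonal' _ v).mp hv_perp u hu
  refine ⟨v, fun hv => ht ?_, ?_⟩
  · rw [← hdv, hv, map_zero]
  · rw [hdv]
    exact div_mul_norm_mul_norm_le_inner_self hC hpoincare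

/-- The Poincaré inequality implies the inf-sup condition (Lemma 3.2, forward direction). -/
theorem poincare_implies_inf_sup
    {V W : Type*} [NormedAddCommGroup V] [InnerProductSpace ℝ V]
    [NormedAddCommGroup W] [InnerProductSpace ℝ W]
    [FiniteDimensional ℝ V] [FiniteDimensional ℝ W]
    (d : V →ₗ[ℝ] W) (C : ℝ) (hC : 0 < C)
    (hP : ∀ u : V, (∀ v : V, d v = 0 → ⟪u, v⟫ = 0) → ‖u‖ ≤ C * ‖d u‖) :
    ∀ t ∈ Set.range d, t ≠ 0 →
      ∃ v : V, v ≠ 0 ∧ ⟪t, d v⟫ ≥ (1 / C) * ‖v‖ * ‖t‖ :=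
  poincare_implies_inf_sup_general d C hC hP
end

section
/- Let V and W be finite-dimensional real inner product spaces and d : V → W linear, C > 0. Suppose the inf-sup condition holds: for every nonzero t ∈ range(d) there exists nonzero v ∈ V with ⟨t, d v⟩ ≥ (1/C)·‖t‖·‖v‖. Then every u ∈ V orthogonal to ker(d) satisfies ‖u‖ ≤ C·‖d u‖. -/
open scoped RealInnerProductSpace

/-- The inf-sup condition implies the Poincaré inequality (Lemma 3.2, converse direction). -/
theorem inf_sup_implies_poincare
    {V W : Type*} [NormedAddCommGroup V] [InnerProductSpace ℝ V]
    [NormedAddCommGroup W] [InnerProductSpace ℝ W]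
    [FiniteDimensional ℝ V] [FiniteDimensional ℝ W]
    (d : V →ₗ[ℝ] W) (C : ℝ) (hC : 0 < C)
    (hIS : ∀ t ∈ Set.range d, t ≠ 0 →
      ∃ v : V, v ≠ 0 ∧ ⟪t, d v⟫ ≥ (1 / C) * ‖t‖ * ‖v‖) :
    ∀ u : V, (∀ v : V, d v = 0 → ⟪u, v⟫ = 0) → ‖u‖ ≤ C * ‖d u‖ := by
  intro u hu
  by_cases hu0 : u = 0
  · simp [hu0]
  -- A := d† ∘ d
  set A : V →ₗ[ℝ] V := LinearMap.adjoint d ∘ₗ d with hA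
  have hkerA : LinearMap.ker A = LinearMap.ker d := by
    apply le_antisymm
    · intro x hx
      have h1 : A x = 0 := hx
      have h2 : ⟪A x, x⟫ = 0 := by rw [h1]; simp
      have h3 : ⟪d x, d x⟫ = (0:ℝ) := by
        rwa [hA, LinearMap.comp_apply, LinearMap.adjoint_inner_left] at h2
      have : d x = 0 := by
        have := inner_self_eq_zero (𝕜 := ℝ) (x := d x)
        exact this.mp h3
      exact this
    · intro x hx
      have : d x = 0 := hx
      show A x = 0
      rw [hA, LinearMap.comp_apply, this, map_zero]
  -- range A = (ker d)ᗮ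
  have hle : LinearMap.range A ≤ (LinearMap.ker d)ᗮ := by
    rintro _ ⟨x, rfl⟩
    intro k hk
    have hdk : d k = 0 := hk
    have : ⟪A x, k⟫ = ⟪d x, d k⟫ := by
      rw [hA, LinearMap.comp_apply, LinearMap.adjoint_inner_left]
    rw [real_inner_comm]
    rw [this, hdk, inner_zero_right]
  have hdim : Module.finrank ℝ (LinearMap.range A) =
      Module.finrank ℝ ((LinearMap.ker d)ᗮ) := by
    have h1 := LinearMap.finrank_range_add_finrank_ker A
    have h2 := Submodule.finrank_add_finrank_orthogonal (K := LinearMap.ker d)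
    rw [hkerA] at h1
    omega
  have hrange : LinearMap.range A = (LinearMap.ker d)ᗮ :=
    Submodule.eq_of_le_of_finrank_eq hle hdim
  -- u ∈ (ker d)ᗮ
  have huK : u ∈ (LinearMap.ker d)ᗮ := by
    intro k hk
    rw [real_inner_comm]
    exact hu k hk
  obtain ⟨s, hs⟩ : ∃ s, A s = u := by
    rw [← hrange] at huK; exact huK
  set t : W := d s with ht
  have htadj : LinearMap.adjoint d t = u := hs
  have hteq : ∀ w : V, ⟪t, d w⟫ = ⟪u, w⟫ := by
    intro w
    rw [← htadj, LinearMap.adjoint_inner_left]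
  have ht0 : t ≠ 0 := by
    intro h
    apply hu0
    rw [← htadj, h, map_zero]
  obtain ⟨v, hv0, hv⟩ := hIS t ⟨s, rfl⟩ ht0
  -- ‖t‖ ≤ C * ‖u‖
  have hvnorm : (0:ℝ) < ‖v‖ := norm_pos_iff.mpr hv0
  have h1 : (1 / C) * ‖t‖ * ‖v‖ ≤ ‖u‖ * ‖v‖ := by
    calc (1 / C) * ‖t‖ * ‖v‖ ≤ ⟪t, d v⟫ := hv
    _ = ⟪u, v⟫ := hteq v
    _ ≤ ‖u‖ * ‖v‖ := real_inner_le_norm u v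
  have h2 : (1 / C) * ‖t‖ ≤ ‖u‖ := le_of_mul_le_mul_right h1 hvnorm
  have h3 : ‖t‖ ≤ C * ‖u‖ := by
    rw [div_mul_eq_mul_div, one_mul, div_le_iff₀ hC] at h2
    linarith [h2]
  -- ‖u‖² = ⟪t, d u⟫ ≤ ‖t‖ ‖d u‖ ≤ C ‖u‖ ‖d u‖
  have h4 : ‖u‖ * ‖u‖ = ⟪t, d u⟫ := by
    rw [hteq u, real_inner_self_eq_norm_mul_norm]
  have h5 : ⟪t, d u⟫ ≤ ‖t‖ * ‖d u‖ := real_inner_le_norm t (d u)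
  have h6 : ‖u‖ * ‖u‖ ≤ C * ‖u‖ * ‖d u‖ := by
    calc ‖u‖ * ‖u‖ = ⟪t, d u⟫ := h4
    _ ≤ ‖t‖ * ‖d u‖ := h5
    _ ≤ C * ‖u‖ * ‖d u‖ := by
        apply mul_le_mul_of_nonneg_right h3 (norm_nonneg _)
  have hunorm : (0:ℝ) < ‖u‖ := norm_pos_iff.mpr hu0
  nlinarith [h6, hunorm]
end

section
/- Peetre–Tartar lemma: Let X, Y, Z be Banach spaces, A : X → Y a bounded injective linear operator, T : X → Z a compact linear operator, and suppose there is γ > 0 with γ‖u‖_X ≤ ‖A u‖_Y + ‖T u‖_Z for all u ∈ X. Then there exists α > 0 such that α‖u‖_X ≤ ‖A u‖_Y for all u ∈ X. -/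
/-- The Peetre–Tartar lemma. -/
theorem peetre_tartar
    {X Y Z : Type*} [NormedAddCommGroup X] [NormedSpace ℝ X] [CompleteSpace X]
    [NormedAddCommGroup Y] [NormedSpace ℝ Y] [CompleteSpace Y]
    [NormedAddCommGroup Z] [NormedSpace ℝ Z] [CompleteSpace Z]
    (A : X →L[ℝ] Y) (hA : Function.Injective A)
    (T : X →L[ℝ] Z) (hT : IsCompactOperator T)
    (γ : ℝ) (hγ : 0 < γ) (hineq : ∀ u : X, γ * ‖u‖ ≤ ‖A u‖ + ‖T u‖) :
    ∃ α : ℝ, 0 < α ∧ ∀ u : X, α * ‖u‖ ≤ ‖A u‖ := by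
  by_contra h
  push_neg at h
  -- For each n, choose u with ‖A u‖ < (1/(n+1)) ‖u‖ ; normalize.
  have hsel : ∀ n : ℕ, ∃ v : X, ‖v‖ = 1 ∧ ‖A v‖ < 1 / (n + 1) := by
    intro n
    obtain ⟨u, hu⟩ := h (1 / (n + 1)) (by positivity)
    have hu0 : u ≠ 0 := by
      rintro rfl
      simp at hu
    refine ⟨‖u‖⁻¹ • u, ?_, ?_⟩
    · rw [norm_smul, norm_inv, norm_norm, inv_mul_cancel₀ (norm_ne_zero_iff.2 hu0)]
    · rw [map_smul, norm_smul, norm_inv, norm_norm]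
      have hnorm : 0 < ‖u‖ := norm_pos_iff.2 hu0
      rw [inv_mul_lt_iff₀ hnorm]
      linarith [hu]
  choose v hv1 hvA using hsel
  -- A v n → 0
  have hA0 : Filter.Tendsto (fun n => ‖A (v n)‖) Filter.atTop (nhds 0) := by
    have h1 : Filter.Tendsto (fun n : ℕ => 1 / ((n : ℝ) + 1)) Filter.atTop (nhds 0) :=
      tendsto_one_div_add_atTop_nhds_zero_nat
    exact squeeze_zero (fun n => norm_nonneg _) (fun n => (hvA n).le) h1
  -- Compactness: extract subsequence with T (v ∘ φ) convergent
  obtain ⟨K, hK, hTK⟩ :=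
    IsCompactOperator.image_closedBall_subset_compact (𝕜₁ := ℝ) (f := (T : X →ₗ[ℝ] Z)) hT 1
  have hmem : ∀ n, T (v n) ∈ K := by
    intro n
    apply hTK
    exact ⟨v n, by simp [Metric.mem_closedBall, (hv1 n).le], rfl⟩
  obtain ⟨z, _, φ, hφ, hz⟩ := hK.tendsto_subseq hmem
  -- v ∘ φ is Cauchy
  have hAφ : Filter.Tendsto (fun n => ‖A (v (φ n))‖) Filter.atTop (nhds 0) :=
    hA0.comp hφ.tendsto_atTop
  have hcauchy : CauchySeq (fun n => v (φ n)) := by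
    rw [Metric.cauchySeq_iff]
    intro ε hε
    have hTc : CauchySeq (fun n => T (v (φ n))) := hz.cauchySeq
    rw [Metric.cauchySeq_iff] at hTc
    obtain ⟨N₁, hN₁⟩ := hTc (γ * ε / 3) (by positivity)
    obtain ⟨N₂, hN₂⟩ := (Metric.tendsto_atTop.1 hAφ) (γ * ε / 3) (by positivity)
    refine ⟨max N₁ N₂, fun m hm n hn => ?_⟩
    have key := hineq (v (φ m) - v (φ n))
    have h1 : ‖A (v (φ m) - v (φ n))‖ ≤ ‖A (v (φ m))‖ + ‖A (v (φ n))‖ := by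
      rw [map_sub]; exact norm_sub_le _ _
    have h2 : ‖A (v (φ m))‖ < γ * ε / 3 := by
      have := hN₂ m (le_trans (le_max_right _ _) hm)
      rwa [Real.dist_eq, sub_zero, abs_of_nonneg (norm_nonneg _)] at this
    have h3 : ‖A (v (φ n))‖ < γ * ε / 3 := by
      have := hN₂ n (le_trans (le_max_right _ _) hn)
      rwa [Real.dist_eq, sub_zero, abs_of_nonneg (norm_nonneg _)] at this
    have h4 : ‖T (v (φ m) - v (φ n))‖ < γ * ε / 3 := by
      have := hN₁ m (le_trans (le_max_left _ _) hm) n (le_trans (le_max_left _ _) hn)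
      rwa [dist_eq_norm, ← map_sub] at this
    have h5 : γ * ‖v (φ m) - v (φ n)‖ < γ * ε := by
      calc γ * ‖v (φ m) - v (φ n)‖ ≤ ‖A (v (φ m) - v (φ n))‖ + ‖T (v (φ m) - v (φ n))‖ := key
        _ ≤ ‖A (v (φ m))‖ + ‖A (v (φ n))‖ + ‖T (v (φ m) - v (φ n))‖ := by linarith
        _ < γ * ε := by linarith
    rw [dist_eq_norm]
    exact lt_of_mul_lt_mul_left h5 hγ.le
  obtain ⟨w, hw⟩ := cauchySeq_tendsto_of_complete hcauchy
  -- ‖w‖ = 1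
  have hwn : ‖w‖ = 1 := by
    have : Filter.Tendsto (fun n => ‖v (φ n)‖) Filter.atTop (nhds ‖w‖) :=
      (continuous_norm.tendsto w).comp hw
    have hconst : (fun n => ‖v (φ n)‖) = fun _ => (1 : ℝ) := funext fun n => hv1 (φ n)
    rw [hconst] at this
    have h1 : Filter.Tendsto (fun _ : ℕ => (1:ℝ)) Filter.atTop (nhds 1) := tendsto_const_nhds
    exact (tendsto_nhds_unique this h1)
  -- A w = 0
  have hAw : A w = 0 := by
    have h1 : Filter.Tendsto (fun n => A (v (φ n))) Filter.atTop (nhds (A w)) :=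
      (A.continuous.tendsto w).comp hw
    have h2 : Filter.Tendsto (fun n => A (v (φ n))) Filter.atTop (nhds 0) := by
      rw [← tendsto_zero_iff_norm_tendsto_zero] at hAφ
      exact hAφ
    exact tendsto_nhds_unique h1 h2
  have : w = 0 := hA (by simp [hAw])
  rw [this, norm_zero] at hwn
  norm_num at hwn
end

section
/- Let V, W be real inner product spaces, Vₕ ⊆ V and Wₕ ⊆ W finite-dimensional subspaces, d : V → W linear with d(Vₕ) ⊆ Wₕ. Suppose: (a) the continuous Poincaré inequality ‖u‖ ≤ C_P·‖d u‖ holds for all u ∈ V orthogonal to ker(d); and (b) for each r ∈ d(Vₕ), the minimal-norm solutions u*ₕ ∈ Vₕ and u* ∈ V of d x = r satisfy ‖u*ₕ‖ ≤ C_min·‖u*‖. Then the discrete Poincaré inequality ‖uₕ‖ ≤ C_min·C_P·‖d uₕ‖ holds for all uₕ ∈ Vₕ orthogonal (in Vₕ) to ker(d) ∩ Vₕ. -/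
open scoped RealInnerProductSpace

/-- Route 1: the continuous Poincaré inequality plus comparison of discrete and
continuous minimal-norm solutions implies the discrete Poincaré inequality. -/
theorem discrete_poincare_via_minimizers
    {V W : Type*} [NormedAddCommGroup V] [InnerProductSpace ℝ V]
    [NormedAddCommGroup W] [InnerProductSpace ℝ W]
    (d : V →ₗ[ℝ] W) (Vh : Submodule ℝ V) [FiniteDimensional ℝ Vh]
    (CP Cmin : ℝ) (hCP : 0 < CP) (hCmin : 0 < Cmin)
    -- (a) continuous Poincaré inequality
    (hP : ∀ u : V, (∀ v : V, d v = 0 → ⟪u, v⟫ = 0) → ‖u‖ ≤ CP * ‖d u‖)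
    -- existence of the continuous minimal-norm solution for piecewise-polynomial data
    (hex : ∀ r ∈ d '' (Vh : Set V),
      ∃ u : V, d u = r ∧ ∀ v : V, d v = 0 → ⟪u, v⟫ = 0)
    -- (b) comparison of the discrete and continuous minimal-norm solutions
    (hmin : ∀ r ∈ d '' (Vh : Set V), ∀ uh u : V,
      uh ∈ Vh → d uh = r → (∀ vh ∈ Vh, d vh = 0 → ⟪uh, vh⟫ = 0) →
      d u = r → (∀ v : V, d v = 0 → ⟪u, v⟫ = 0) →
      ‖uh‖ ≤ Cmin * ‖u‖) :
    ∀ uh ∈ Vh, (∀ vh ∈ Vh, d vh = 0 → ⟪uh, vh⟫ = 0) →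
      ‖uh‖ ≤ Cmin * CP * ‖d uh‖ := by
  intro uh huh horth
  have hr : d uh ∈ d '' (Vh : Set V) := ⟨uh, huh, rfl⟩
  obtain ⟨u, hu, huo⟩ := hex (d uh) hr
  have h1 : ‖uh‖ ≤ Cmin * ‖u‖ := hmin (d uh) hr uh u huh rfl horth hu huo
  have h2 : ‖u‖ ≤ CP * ‖d u‖ := hP u huo
  calc ‖uh‖ ≤ Cmin * ‖u‖ := h1
    _ ≤ Cmin * (CP * ‖d u‖) := by nlinarith [norm_nonneg u]
    _ = Cmin * CP * ‖d uh‖ := by rw [hu]; ring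
end

section
/- Let V, W be real inner product spaces, Vₕ ⊆ V, Wₕ ⊆ W subspaces, and d : V → W linear with d(Vₕ) ⊆ Wₕ. Assume there exist linear projections Π_V : V → Vₕ and Π_W : W → Wₕ (i.e., restricting to the identity on Vₕ and Wₕ) satisfying the commuting property d ∘ Π_V = Π_W ∘ d on V, and the stability bound ‖Π_V u‖ ≤ C_st·‖u‖ for all u ∈ V with d u ∈ Wₕ. If the continuous Poincaré inequality ‖u‖ ≤ C_P·‖d u‖ holds for all u ∈ V orthogonal to ker(d), and if for each r ∈ d(Vₕ) the continuous and discrete constrained minimizers exist, then ‖uₕ‖ ≤ C_st·C_P·‖d uₕ‖ for every uₕ ∈ Vₕ orthogonal to ker(d) ∩ Vₕ. -/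
open scoped RealInnerProductSpace

/-- Route 2 (Lemma 6.2): stable commuting projections imply the discrete
Poincaré inequality. -/
theorem discrete_poincare_via_commuting_projections
    {V W : Type*} [NormedAddCommGroup V] [InnerProductSpace ℝ V]
    [NormedAddCommGroup W] [InnerProductSpace ℝ W]
    (d : V →ₗ[ℝ] W) (Vh : Submodule ℝ V) (Wh : Submodule ℝ W)
    [FiniteDimensional ℝ Vh] [FiniteDimensional ℝ Wh]
    (hdVh : ∀ vh ∈ Vh, d vh ∈ Wh)
    (PiV : V →ₗ[ℝ] V) (PiW : W →ₗ[ℝ] W)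
    (hPiVrange : ∀ u : V, PiV u ∈ Vh) (hPiVproj : ∀ vh ∈ Vh, PiV vh = vh)
    (hPiWrange : ∀ w : W, PiW w ∈ Wh) (hPiWproj : ∀ wh ∈ Wh, PiW wh = wh)
    (hcommute : ∀ u : V, d (PiV u) = PiW (d u))
    (Cst CP : ℝ) (hCst : 0 < Cst) (hCP : 0 < CP)
    (hstab : ∀ u : V, d u ∈ Wh → ‖PiV u‖ ≤ Cst * ‖u‖)
    (hP : ∀ u : V, (∀ v : V, d v = 0 → ⟪u, v⟫ = 0) → ‖u‖ ≤ CP * ‖d u‖)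
    (hex : ∀ r ∈ d '' (Vh : Set V),
      ∃ u : V, d u = r ∧ ∀ v : V, d v = 0 → ⟪u, v⟫ = 0) :
    ∀ uh ∈ Vh, (∀ vh ∈ Vh, d vh = 0 → ⟪uh, vh⟫ = 0) →
      ‖uh‖ ≤ Cst * CP * ‖d uh‖ := by
  intro uh huh horth
  obtain ⟨u, hdu, huo⟩ := hex (d uh) ⟨uh, huh, rfl⟩
  have hduWh : d uh ∈ Wh := hdVh uh huh
  have hdPiVu : d (PiV u) = d uh := by
    rw [hcommute, hdu, hPiWproj _ hduWh]
  have hker : d (uh - PiV u) = 0 := by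
    rw [map_sub, hdPiVu, sub_self]
  have hmem : uh - PiV u ∈ Vh := Vh.sub_mem huh (hPiVrange u)
  have h0 : ⟪uh, uh - PiV u⟫ = 0 := horth _ hmem hker
  have hsq : ⟪uh, uh⟫ = ⟪uh, PiV u⟫ := by
    have := inner_sub_right (𝕜 := ℝ) uh uh (PiV u)
    rw [h0] at this
    linarith
  have h1 : ‖uh‖ ^ 2 ≤ ‖uh‖ * ‖PiV u‖ := by
    rw [sq]
    calc ‖uh‖ * ‖uh‖ = ⟪uh, uh⟫ := (real_inner_self_eq_norm_mul_norm uh).symm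
      _ = ⟪uh, PiV u⟫ := hsq
      _ ≤ ‖uh‖ * ‖PiV u‖ := real_inner_le_norm _ _
  have h2 : ‖uh‖ ≤ ‖PiV u‖ := by
    rcases eq_or_lt_of_le (norm_nonneg uh) with h | h
    · rw [← h]; exact norm_nonneg _
    · nlinarith
  have h3 : ‖PiV u‖ ≤ Cst * ‖u‖ := hstab u (by rw [hdu]; exact hduWh)
  have h4 : ‖u‖ ≤ CP * ‖d u‖ := hP u huo
  rw [hdu] at h4
  calc ‖uh‖ ≤ Cst * ‖u‖ := h2.trans h3
    _ ≤ Cst * (CP * ‖d uh‖) := by nlinarith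
    _ = Cst * CP * ‖d uh‖ := by ring
end

section
/- Graph-norm variant of Route 2: Under the same setting as the commuting-projection lemma, but with stability in the graph norm ‖Π_V u‖_graph ≤ C_st·‖u‖_graph where ‖v‖_graph² = ‖v‖² + h²‖d v‖² for a fixed h > 0, the discrete Poincaré inequality holds with constant C_st·(1 + C_P²)^{1/2}: namely ‖uₕ‖ ≤ C_st·(1 + C_P²)^{1/2}·h·‖d uₕ‖ for all uₕ ∈ Vₕ orthogonal to ker(d) ∩ Vₕ, given the continuous inequality ‖u‖ ≤ C_P·h·‖d u‖ for u ⊥ ker(d). -/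
open scoped RealInnerProductSpace

/-- Route 2, graph-norm variant (Remark 6.4): commuting projections stable in the graph
norm imply the discrete Poincaré inequality with constant `Cst * √(1 + CP²)`. -/
theorem discrete_poincare_via_graph_stable_commuting_projections
    {V W : Type*} [NormedAddCommGroup V] [InnerProductSpace ℝ V]
    [NormedAddCommGroup W] [InnerProductSpace ℝ W]
    (d : V →ₗ[ℝ] W) (Vh : Submodule ℝ V) (Wh : Submodule ℝ W)
    [FiniteDimensional ℝ Vh] [FiniteDimensional ℝ Wh]
    (hdVh : ∀ vh ∈ Vh, d vh ∈ Wh)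
    (PiV : V →ₗ[ℝ] V) (PiW : W →ₗ[ℝ] W)
    (hPiVrange : ∀ u : V, PiV u ∈ Vh) (hPiVproj : ∀ vh ∈ Vh, PiV vh = vh)
    (hPiWrange : ∀ w : W, PiW w ∈ Wh) (hPiWproj : ∀ wh ∈ Wh, PiW wh = wh)
    (hcommute : ∀ u : V, d (PiV u) = PiW (d u))
    (Cst CP h : ℝ) (hCst : 0 < Cst) (hCP : 0 < CP) (hh : 0 < h)
    -- graph-norm stability of the projection
    (hstab : ∀ u : V, Real.sqrt (‖PiV u‖ ^ 2 + h ^ 2 * ‖d (PiV u)‖ ^ 2) ≤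
      Cst * Real.sqrt (‖u‖ ^ 2 + h ^ 2 * ‖d u‖ ^ 2))
    -- continuous Poincaré inequality
    (hP : ∀ u : V, (∀ v : V, d v = 0 → ⟪u, v⟫ = 0) → ‖u‖ ≤ CP * h * ‖d u‖)
    -- existence of continuous minimal-norm solutions
    (hex : ∀ r ∈ d '' (Vh : Set V),
      ∃ u : V, d u = r ∧ ∀ v : V, d v = 0 → ⟪u, v⟫ = 0) :
    ∀ uh ∈ Vh, (∀ vh ∈ Vh, d vh = 0 → ⟪uh, vh⟫ = 0) →
      ‖uh‖ ≤ Cst * Real.sqrt (1 + CP ^ 2) * h * ‖d uh‖ := by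
  intro uh huh horth
  obtain ⟨u, hdu, huperp⟩ := hex (d uh) ⟨uh, huh, rfl⟩
  have hdPVu : d (PiV u) = d uh := by
    rw [hcommute, hdu, hPiWproj _ (hdVh uh huh)]
  have hker : d (uh - PiV u) = 0 := by simp [map_sub, hdPVu]
  have h0 : ⟪uh, uh - PiV u⟫ = 0 :=
    horth _ (Vh.sub_mem huh (hPiVrange u)) hker
  have h1 : ‖uh‖ ^ 2 ≤ ‖uh‖ * ‖PiV u‖ := by
    rw [inner_sub_right] at h0
    have := real_inner_le_norm uh (PiV u)
    nlinarith [real_inner_self_eq_norm_sq uh]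
  -- ‖uh‖ ≤ ‖PiV u‖
  have h2 : ‖uh‖ ≤ ‖PiV u‖ := by
    rcases eq_or_lt_of_le (norm_nonneg uh) with h | h
    · rw [← h]; exact norm_nonneg _
    · nlinarith
  have h3 : ‖PiV u‖ ≤ Real.sqrt (‖PiV u‖ ^ 2 + h ^ 2 * ‖d (PiV u)‖ ^ 2) := by
    rw [Real.le_sqrt (norm_nonneg _) (by positivity)]
    nlinarith [sq_nonneg (h * ‖d (PiV u)‖), norm_nonneg (d (PiV u))]
  have hu : ‖u‖ ≤ CP * h * ‖d u‖ := hP u huperp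
  have h4 : Real.sqrt (‖u‖ ^ 2 + h ^ 2 * ‖d u‖ ^ 2) ≤
      Real.sqrt ((1 + CP ^ 2) * (h * ‖d uh‖) ^ 2) := by
    apply Real.sqrt_le_sqrt
    rw [hdu] at hu ⊢
    nlinarith [norm_nonneg u, mul_nonneg (mul_nonneg hCP.le hh.le) (norm_nonneg (d uh))]
  have h5 : Real.sqrt ((1 + CP ^ 2) * (h * ‖d uh‖) ^ 2) =
      Real.sqrt (1 + CP ^ 2) * (h * ‖d uh‖) := by
    rw [Real.sqrt_mul (by positivity), Real.sqrt_sq (by positivity)]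
  calc ‖uh‖ ≤ ‖PiV u‖ := h2
    _ ≤ Real.sqrt (‖PiV u‖ ^ 2 + h ^ 2 * ‖d (PiV u)‖ ^ 2) := h3
    _ ≤ Cst * Real.sqrt (‖u‖ ^ 2 + h ^ 2 * ‖d u‖ ^ 2) := hstab u
    _ ≤ Cst * (Real.sqrt (1 + CP ^ 2) * (h * ‖d uh‖)) := by
        rw [← h5]; exact mul_le_mul_of_nonneg_left h4 hCst.le
    _ = Cst * Real.sqrt (1 + CP ^ 2) * h * ‖d uh‖ := by ring
end

section
/- Let V, W be finite-dimensional real inner product spaces and d : V → W linear such that the Poincaré inequality ‖u‖ ≤ C·‖d u‖ holds for all u ⊥ ker(d). For r ∈ range(d), let (u*, s*) solve the mixed system: ⟨u*, v⟩ − ⟨s*, d v⟩ = 0 for all v ∈ V, and ⟨d u*, t⟩ = ⟨r, t⟩ for all t ∈ range(d), with s* ∈ range(d). Then ‖u*‖ ≤ C·‖r‖. -/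
open scoped RealInnerProductSpace

/-- Stability estimate for the mixed (saddle point) formulation (step (2) of the
proof of Lemma 3.2). -/
theorem mixed_formulation_stability
    {V W : Type*} [NormedAddCommGroup V] [InnerProductSpace ℝ V]
    [NormedAddCommGroup W] [InnerProductSpace ℝ W]
    [FiniteDimensional ℝ V] [FiniteDimensional ℝ W]
    (d : V →ₗ[ℝ] W) (C : ℝ) (hC : 0 < C)
    (hP : ∀ u : V, (∀ v : V, d v = 0 → ⟪u, v⟫ = 0) → ‖u‖ ≤ C * ‖d u‖)
    (r : W) (hr : r ∈ Set.range d)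
    (ustar : V) (sstar : W) (hs : sstar ∈ Set.range d)
    (heq1 : ∀ v : V, ⟪ustar, v⟫ - ⟪sstar, d v⟫ = 0)
    (heq2 : ∀ t ∈ Set.range d, ⟪d ustar, t⟫ = ⟪r, t⟫) :
    ‖ustar‖ ≤ C * ‖r‖ := by
  have hperp : ∀ v : V, d v = 0 → ⟪ustar, v⟫ = 0 := by
    intro v hv
    have := heq1 v
    rw [hv] at this
    simpa using this
  have h1 : ‖ustar‖ ≤ C * ‖d ustar‖ := hP ustar hperp
  have h2 : ⟪d ustar, d ustar⟫ = ⟪r, d ustar⟫ := heq2 _ ⟨ustar, rfl⟩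
  have h3 : ‖d ustar‖ ^ 2 ≤ ‖r‖ * ‖d ustar‖ := by
    calc ‖d ustar‖ ^ 2 = ⟪d ustar, d ustar⟫ := (real_inner_self_eq_norm_sq _).symm
    _ = ⟪r, d ustar⟫ := h2
    _ ≤ ‖r‖ * ‖d ustar‖ := real_inner_le_norm _ _
  have h4 : ‖d ustar‖ ≤ ‖r‖ := by
    rcases eq_or_lt_of_le (norm_nonneg (d ustar)) with h | h
    · rw [← h]; exact norm_nonneg r
    · nlinarith
  calc ‖ustar‖ ≤ C * ‖d ustar‖ := h1
  _ ≤ C * ‖r‖ := by nlinarith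
end

section
/- If Ψ : V → V̂ and Ψ' : W → Ŵ are linear isomorphisms between finite-dimensional real inner product spaces intertwining linear maps d : V → W and d̂ : V̂ → Ŵ (i.e., Ψ' ∘ d = d̂ ∘ Ψ), and the Poincaré inequality ‖û‖ ≤ Ĉ·‖d̂ û‖ holds on V̂ for all û ⊥ ker(d̂), then the Poincaré inequality holds on V with constant ‖Ψ⁻¹‖·Ĉ·‖Ψ'‖: for all u ∈ V orthogonal to ker(d), ‖u‖ ≤ ‖Ψ⁻¹‖·Ĉ·‖Ψ'‖·‖d u‖. -/
/-!
Every `u ⊥ ker d` is the element of least norm in `u + ker d`. Since `Ψ` maps `ker d` onto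
`ker d̂`, the Poincaré inequality on `V̂`, applied to the component of `Ψ u` orthogonal to
`ker d̂`, yields some `w ∈ u + ker d` with `‖w‖ ≤ ‖Ψ⁻¹‖ Ĉ ‖d̂ (Ψ u)‖ = ‖Ψ⁻¹‖ Ĉ ‖Ψ' (d u)‖`.
-/

open scoped RealInnerProductSpace

def PoincareInequality {E F : Type*} [NormedAddCommGroup E] [InnerProductSpace ℝ E]
    [NormedAddCommGroup F] [NormedSpace ℝ F] (d : E →ₗ[ℝ] F) (C : ℝ) : Prop :=
  ∀ u : E, (∀ v : E, d v = 0 → ⟪u, v⟫ = 0) → ‖u‖ ≤ C * ‖d u‖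

theorem norm_le_of_forall_inner_eq_zero_of_sub_mem {E : Type*} [NormedAddCommGroup E]
    [InnerProductSpace ℝ E] {K : Submodule ℝ E} {u w : E} (hu : ∀ v ∈ K, ⟪u, v⟫ = 0)
    (huw : w - u ∈ K) : ‖u‖ ≤ ‖w‖ := by
  have hpyth : ‖w‖ * ‖w‖ = ‖u‖ * ‖u‖ + ‖w - u‖ * ‖w - u‖ := by
    simpa using norm_add_sq_eq_norm_sq_add_norm_sq_real (hu _ huw)
  nlinarith [norm_nonneg u, norm_nonneg w, mul_self_nonneg ‖w - u‖]

theorem LinearMap.ker_eq_comap_ker_of_intertwine {R V W Vhat What : Type*} [Semiring R]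
    [AddCommMonoid V] [Module R V] [AddCommMonoid W] [Module R W]
    [AddCommMonoid Vhat] [Module R Vhat] [AddCommMonoid What] [Module R What]
    {d : V →ₗ[R] W} {dhat : Vhat →ₗ[R] What} (Psi : V →ₗ[R] Vhat) (Psi' : W ≃ₗ[R] What)
    (h : ∀ v, Psi' (d v) = dhat (Psi v)) :
    LinearMap.ker d = (LinearMap.ker dhat).comap Psi := by
  have hcomp : Psi'.toLinearMap ∘ₗ d = dhat ∘ₗ Psi := LinearMap.ext h
  rw [← LinearMap.ker_comp, ← hcomp, LinearEquiv.ker_comp]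

namespace PoincareInequality

variable {E F : Type*} [NormedAddCommGroup E] [InnerProductSpace ℝ E] [NormedAddCommGroup F]
  [NormedSpace ℝ F] {d : E →ₗ[ℝ] F} {C : ℝ}

theorem exists_sub_mem_ker_norm_le (hP : PoincareInequality d C)
    [(LinearMap.ker d).HasOrthogonalProjection] (x : E) :
    ∃ y, x - y ∈ LinearMap.ker d ∧ ‖y‖ ≤ C * ‖d x‖ := by
  set K := LinearMap.ker d
  have hyK : x - K.starProjection x ∈ Kᗮ := K.sub_starProjection_mem_orthogonal x
  have hdy : d (x - K.starProjection x) = d x := by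
    rw [map_sub, LinearMap.mem_ker.mp (K.starProjection_apply_mem x), sub_zero]
  refine ⟨x - K.starProjection x, by rw [sub_sub_cancel]; exact K.starProjection_apply_mem x, ?_⟩
  rw [← hdy]
  exact hP _ fun v hv => (K.inner_right_of_mem_orthogonal hv hyK).symm ▸ real_inner_comm _ _

theorem of_intertwine {V W : Type*} [NormedAddCommGroup V] [InnerProductSpace ℝ V]
    [NormedAddCommGroup W] [NormedSpace ℝ W]
    [(LinearMap.ker d).HasOrthogonalProjection] (hP : PoincareInequality d C) (hC : 0 ≤ C)
    (dV : V →ₗ[ℝ] W) (Psi : V ≃L[ℝ] E) (Psi' : W ≃L[ℝ] F)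
    (h : ∀ v, Psi' (dV v) = d (Psi v)) :
    PoincareInequality dV (‖(Psi.symm : E →L[ℝ] V)‖ * C * ‖(Psi' : W →L[ℝ] F)‖) := by
  intro u hu
  obtain ⟨y, hy_ker, hy⟩ := hP.exists_sub_mem_ker_norm_le (Psi u)
  have hker : Psi.symm y - u ∈ LinearMap.ker dV := by
    rw [LinearMap.ker_eq_comap_ker_of_intertwine (Psi : V →ₗ[ℝ] E) Psi'.toLinearEquiv h]
    change Psi (Psi.symm y - u) ∈ LinearMap.ker d
    rw [map_sub, Psi.apply_symm_apply, ← neg_sub]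
    exact neg_mem hy_ker
  calc ‖u‖ ≤ ‖Psi.symm y‖ := norm_le_of_forall_inner_eq_zero_of_sub_mem hu hker
    _ ≤ ‖(Psi.symm : E →L[ℝ] V)‖ * ‖y‖ := (Psi.symm : E →L[ℝ] V).le_opNorm y
    _ ≤ ‖(Psi.symm : E →L[ℝ] V)‖ * (C * ‖Psi' (dV u)‖) := by rw [h]; gcongr
    _ ≤ ‖(Psi.symm : E →L[ℝ] V)‖ * (C * (‖(Psi' : W →L[ℝ] F)‖ * ‖dV u‖)) := by
        gcongr; exact (Psi' : W →L[ℝ] F).le_opNorm (dV u)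
    _ = ‖(Psi.symm : E →L[ℝ] V)‖ * C * ‖(Psi' : W →L[ℝ] F)‖ * ‖dV u‖ := by ring

end PoincareInequality

theorem poincare_transport_through_isomorphisms_general
    {V W Vhat What : Type*}
    [NormedAddCommGroup V] [InnerProductSpace ℝ V]
    [NormedAddCommGroup W] [InnerProductSpace ℝ W]
    [NormedAddCommGroup Vhat] [InnerProductSpace ℝ Vhat] [FiniteDimensional ℝ Vhat]
    [NormedAddCommGroup What] [InnerProductSpace ℝ What]
    (d : V →ₗ[ℝ] W) (dhat : Vhat →ₗ[ℝ] What)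
    (Psi : V ≃L[ℝ] Vhat) (Psi' : W ≃L[ℝ] What)
    (hintertwine : ∀ v : V, Psi' (d v) = dhat (Psi v))
    (Chat : ℝ) (hChat : 0 < Chat)
    (hPhat : ∀ uhat : Vhat, (∀ vhat : Vhat, dhat vhat = 0 → ⟪uhat, vhat⟫ = 0) →
      ‖uhat‖ ≤ Chat * ‖dhat uhat‖) :
    ∀ u : V, (∀ v : V, d v = 0 → ⟪u, v⟫ = 0) →
      ‖u‖ ≤ ‖(Psi.symm : Vhat →L[ℝ] V)‖ * Chat * ‖(Psi' : W →L[ℝ] What)‖ * ‖d u‖ :=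
  PoincareInequality.of_intertwine hPhat hChat.le d Psi Psi' hintertwine

/-- Route 3 (abstract core): transporting a Poincaré inequality through intertwining
isomorphisms (piecewise Piola transformations). -/
theorem poincare_transport_through_isomorphisms
    {V W Vhat What : Type*}
    [NormedAddCommGroup V] [InnerProductSpace ℝ V] [FiniteDimensional ℝ V]
    [NormedAddCommGroup W] [InnerProductSpace ℝ W] [FiniteDimensional ℝ W]
    [NormedAddCommGroup Vhat] [InnerProductSpace ℝ Vhat] [FiniteDimensional ℝ Vhat]
    [NormedAddCommGroup What] [InnerProductSpace ℝ What] [FiniteDimensional ℝ What]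
    (d : V →ₗ[ℝ] W) (dhat : Vhat →ₗ[ℝ] What)
    (Psi : V ≃L[ℝ] Vhat) (Psi' : W ≃L[ℝ] What)
    (hintertwine : ∀ v : V, Psi' (d v) = dhat (Psi v))
    (Chat : ℝ) (hChat : 0 < Chat)
    (hPhat : ∀ uhat : Vhat, (∀ vhat : Vhat, dhat vhat = 0 → ⟪uhat, vhat⟫ = 0) →
      ‖uhat‖ ≤ Chat * ‖dhat uhat‖) :
    ∀ u : V, (∀ v : V, d v = 0 → ⟪u, v⟫ = 0) →
      ‖u‖ ≤ ‖(Psi.symm : Vhat →L[ℝ] V)‖ * Chat * ‖(Psi' : W →L[ℝ] What)‖ * ‖d u‖ :=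
  poincare_transport_through_isomorphisms_general d dhat Psi Psi' hintertwine Chat hChat hPhat
end

section
/- Stability of the minimizing commuting projection: In the setting where Π(u) is defined as the minimizer of ‖u − vₕ‖ over {vₕ ∈ Vₕ : d vₕ = P(d u)}, if the discrete inf-sup condition holds in the graph norm with constant β > 0 (for every nonzero t ∈ d(Vₕ), sup_{vₕ ∈ Vₕ} ⟨t, d vₕ⟩/(‖t‖·‖vₕ‖_graph) ≥ β, with ‖v‖_graph² = ‖v‖² + h²‖d v‖²), then ‖Π u‖_graph ≤ ‖u‖_graph + (2/β)·‖d u‖ for all u ∈ V. -/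
open scoped RealInnerProductSpace

/-! The inf-sup condition says that the adjoint of `d : (Vₕ, ‖·‖_graph) → d(Vₕ)` is bounded below
by `β`, so `d d†` is invertible on `d(Vₕ)` and `w := d† (d d†)⁻¹ t` is a preimage of `t` with
`β ‖w‖_graph ≤ ‖t‖`; take `t = P (d u)`. Since `Π u` minimizes the distance to `u` over the affine
space `w + (Vₕ ∩ ker d)`, `u - Π u` is orthogonal to `Vₕ ∩ ker d`, and Pythagoras gives
`‖Π u - w‖ ≤ ‖u - w‖ ≤ ‖u‖ + ‖w‖`. As `d (Π u - w) = 0`, the graph norm of `Π u - w` is its plain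
norm, and the triangle inequality yields the bound with `2 ‖P (d u)‖ / β ≤ 2 ‖d u‖ / β`. -/

namespace LinearMap

variable {E F : Type*} [NormedAddCommGroup E] [InnerProductSpace ℝ E] [FiniteDimensional ℝ E]
  [NormedAddCommGroup F] [InnerProductSpace ℝ F] [FiniteDimensional ℝ F]

theorem mul_norm_le_norm_adjoint_apply_of_inf_sup (B : E →ₗ[ℝ] F) {β : ℝ}
    (hB : ∀ t ≠ 0, ∃ x ≠ 0, β * (‖t‖ * ‖x‖) ≤ ⟪t, B x⟫) (t : F) :
    β * ‖t‖ ≤ ‖adjoint B t‖ := by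
  rcases eq_or_ne t 0 with rfl | ht
  · simp
  obtain ⟨x, hx, hβx⟩ := hB t ht
  refine le_of_mul_le_mul_right ?_ (norm_pos_iff.2 hx)
  calc β * ‖t‖ * ‖x‖ = β * (‖t‖ * ‖x‖) := mul_assoc _ _ _
    _ ≤ ⟪t, B x⟫ := hβx
    _ = ⟪adjoint B t, x⟫ := (adjoint_inner_left B x t).symm
    _ ≤ ‖adjoint B t‖ * ‖x‖ := real_inner_le_norm _ _

theorem exists_apply_eq_mul_norm_le_of_inf_sup (B : E →ₗ[ℝ] F) {β : ℝ} (hβ : 0 < β)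
    (hB : ∀ t ≠ 0, ∃ x ≠ 0, β * (‖t‖ * ‖x‖) ≤ ⟪t, B x⟫) (t : F) :
    ∃ x, B x = t ∧ β * ‖x‖ ≤ ‖t‖ := by
  have hlow := B.mul_norm_le_norm_adjoint_apply_of_inf_sup hB
  have hinj : Function.Injective (B ∘ₗ adjoint B) := by
    refine (injective_iff_map_eq_zero _).2 fun s hs => ?_
    have hs' : adjoint B s = 0 := inner_self_eq_zero.1 <| by
      rw [adjoint_inner_left, ← comp_apply, hs, inner_zero_right]
    have hβs : β * ‖s‖ ≤ 0 := by simpa [hs'] using hlow s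
    exact norm_le_zero_iff.1 (nonpos_of_mul_nonpos_right hβs hβ)
  obtain ⟨s, rfl⟩ := injective_iff_surjective.1 hinj t
  refine ⟨adjoint B s, rfl, ?_⟩
  set x := adjoint B s
  have hx2 : ‖x‖ ^ 2 ≤ ‖s‖ * ‖B x‖ := by
    rw [← real_inner_self_eq_norm_sq, adjoint_inner_left]
    exact real_inner_le_norm _ _
  rcases (norm_nonneg x).eq_or_lt with hx0 | hxpos
  · rw [← hx0, mul_zero]
    exact norm_nonneg _
  refine le_of_mul_le_mul_right ?_ hxpos
  calc β * ‖x‖ * ‖x‖ = β * ‖x‖ ^ 2 := by ring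
    _ ≤ β * (‖s‖ * ‖B x‖) := by gcongr
    _ = β * ‖s‖ * ‖B x‖ := by ring
    _ ≤ ‖x‖ * ‖B x‖ := by gcongr; exact hlow s
    _ = ‖B x‖ * ‖x‖ := mul_comm _ _

end LinearMap

section GraphNorm

variable {V W : Type*} [NormedAddCommGroup V] [InnerProductSpace ℝ V]
  [NormedAddCommGroup W] [InnerProductSpace ℝ W] (d : V →ₗ[ℝ] W) (h : ℝ)

def graphEmbedding : V →ₗ[ℝ] WithLp 2 (V × W) :=
  (WithLp.linearEquiv 2 ℝ (V × W)).symm.toLinearMap ∘ₗ LinearMap.id.prod (h • d)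

theorem norm_graphEmbedding (v : V) :
    ‖graphEmbedding d h v‖ = √(‖v‖ ^ 2 + h ^ 2 * ‖d v‖ ^ 2) := by
  rw [WithLp.prod_norm_eq_of_L2]
  simp [graphEmbedding, norm_smul, mul_pow]

theorem norm_le_norm_graphEmbedding (v : V) : ‖v‖ ≤ ‖graphEmbedding d h v‖ := by
  rw [norm_graphEmbedding]
  exact Real.le_sqrt_of_sq_le (le_add_of_nonneg_right (by positivity))

theorem norm_graphEmbedding_of_apply_eq_zero {v : V} (hv : d v = 0) :
    ‖graphEmbedding d h v‖ = ‖v‖ := by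
  simp [norm_graphEmbedding, hv]

theorem exists_mem_apply_eq_mul_norm_graphEmbedding_le [FiniteDimensional ℝ V]
    (Vh : Submodule ℝ V) {β : ℝ} (hβ : 0 < β)
    (hinfsup : ∀ t ∈ d '' Vh, t ≠ 0 →
      ∃ vh ∈ Vh, vh ≠ 0 ∧ β * (‖t‖ * ‖graphEmbedding d h vh‖) ≤ ⟪t, d vh⟫)
    {t : W} (ht : t ∈ d '' Vh) :
    ∃ wh ∈ Vh, d wh = t ∧ β * ‖graphEmbedding d h wh‖ ≤ ‖t‖ := by
  let B : Vh.map (graphEmbedding d h) →ₗ[ℝ] Vh.map d :=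
    (d ∘ₗ WithLp.fstₗ 2 ℝ V W).restrict (by rintro _ ⟨v, hv, rfl⟩; exact ⟨v, hv, rfl⟩)
  have hB : ∀ t ≠ 0, ∃ x ≠ 0, β * (‖t‖ * ‖x‖) ≤ ⟪t, B x⟫ := by
    rintro ⟨t, ht⟩ hne
    obtain ⟨vh, hvh, hvh0, hvh_inner⟩ := hinfsup t ht (by simpa using hne)
    refine ⟨⟨graphEmbedding d h vh, Submodule.mem_map_of_mem hvh⟩, ?_, hvh_inner⟩
    exact norm_ne_zero_iff.1
      ((norm_pos_iff.2 hvh0).trans_le (norm_le_norm_graphEmbedding d h vh)).ne'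
  obtain ⟨⟨_, wh, hwh, rfl⟩, hBw, hw⟩ := B.exists_apply_eq_mul_norm_le_of_inf_sup hβ hB ⟨t, ht⟩
  exact ⟨wh, hwh, congrArg Subtype.val hBw, hw⟩

end GraphNorm

section Minimizer

variable {V : Type*} [NormedAddCommGroup V] [InnerProductSpace ℝ V]

theorem Submodule.mem_orthogonal_of_forall_norm_le_norm_sub (K : Submodule ℝ V) {x : V}
    (hx : ∀ z ∈ K, ‖x‖ ≤ ‖x - z‖) : x ∈ Kᗮ := by
  have hinf : ‖x - 0‖ = ⨅ z : (K : Set V), ‖x - z‖ := by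
    refine le_antisymm (le_ciInf fun z => by simpa using hx z z.2) ?_
    exact ciInf_le ⟨0, Set.forall_mem_range.2 fun _ => norm_nonneg _⟩ (0 : K)
  simpa [mem_orthogonal'] using (norm_eq_iInf_iff_real_inner_eq_zero K K.zero_mem).1 hinf

theorem Submodule.norm_sub_le_norm_sub_of_forall_norm_le (K : Submodule ℝ V) {u p w : V}
    (hmin : ∀ z ∈ K, ‖u - p‖ ≤ ‖u - (p + z)‖) (hw : p - w ∈ K) : ‖p - w‖ ≤ ‖u - w‖ := by
  have horth : u - p ∈ Kᗮ :=
    K.mem_orthogonal_of_forall_norm_le_norm_sub fun z hz => by simpa [sub_sub] using hmin z hz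
  have hpyth : ‖u - w‖ * ‖u - w‖ = ‖u - p‖ * ‖u - p‖ + ‖p - w‖ * ‖p - w‖ := by
    rw [← sub_add_sub_cancel u p w]
    exact norm_add_sq_eq_norm_sq_add_norm_sq_real (K.inner_left_of_mem_orthogonal hw horth)
  exact (mul_self_le_mul_self_iff (norm_nonneg _) (norm_nonneg _)).2
    (hpyth ▸ le_add_of_nonneg_left (mul_self_nonneg _))

end Minimizer

theorem minimizing_commuting_projection_graph_stability_general
    {V W : Type*} [NormedAddCommGroup V] [InnerProductSpace ℝ V]
    [NormedAddCommGroup W] [InnerProductSpace ℝ W]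
    [FiniteDimensional ℝ V] [FiniteDimensional ℝ W]
    (d : V →ₗ[ℝ] W) (Vh : Submodule ℝ V) (Wh : Submodule ℝ W)
    (h β : ℝ) (hβ : 0 < β)
    -- discrete inf-sup condition in the graph norm
    (hIS : ∀ t ∈ d '' (Vh : Set V), t ≠ 0 →
      ∃ vh ∈ Vh, vh ≠ 0 ∧ ⟪t, d vh⟫ ≥
        β * (‖t‖ * Real.sqrt (‖vh‖ ^ 2 + h ^ 2 * ‖d vh‖ ^ 2)))
    (Pi : V → V)
    -- `Pi u` is the minimizer of `‖u - vh‖` over `{vh ∈ Vh : d vh = P (d u)}`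
    (hmem : ∀ u : V, Pi u ∈ Vh)
    (hconstraint : ∀ u : V, d (Pi u) = (Wh.orthogonalProjection (d u) : W))
    (hminimal : ∀ u : V, ∀ vh ∈ Vh, d vh = (Wh.orthogonalProjection (d u) : W) →
      ‖u - Pi u‖ ≤ ‖u - vh‖) :
    ∀ u : V, Real.sqrt (‖Pi u‖ ^ 2 + h ^ 2 * ‖d (Pi u)‖ ^ 2) ≤
      Real.sqrt (‖u‖ ^ 2 + h ^ 2 * ‖d u‖ ^ 2) + (2 / β) * ‖d u‖ := by
  intro u
  simp only [← norm_graphEmbedding d h] at hIS ⊢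
  set G := graphEmbedding d h
  obtain ⟨wh, hwh, hdwh, hwh_le⟩ := exists_mem_apply_eq_mul_norm_graphEmbedding_le d h Vh hβ hIS
    ⟨Pi u, hmem u, hconstraint u⟩
  have hker : Pi u - wh ∈ Vh ⊓ LinearMap.ker d :=
    ⟨Vh.sub_mem (hmem u) hwh, by simp [hconstraint, hdwh]⟩
  have hPi : ‖Pi u - wh‖ ≤ ‖u - wh‖ := by
    refine (Vh ⊓ LinearMap.ker d).norm_sub_le_norm_sub_of_forall_norm_le (fun z hz => ?_) hker
    refine hminimal u _ (Vh.add_mem (hmem u) hz.1) ?_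
    rw [map_add, LinearMap.mem_ker.1 hz.2, add_zero, hconstraint]
  have hG : ‖G wh‖ ≤ ‖d u‖ / β := by
    rw [le_div_iff₀' hβ]
    exact hwh_le.trans (Wh.norm_orthogonalProjectionOnto_apply_le (d u))
  calc ‖G (Pi u)‖ = ‖G (Pi u - wh) + G wh‖ := by rw [← map_add, sub_add_cancel]
    _ ≤ ‖Pi u - wh‖ + ‖G wh‖ := by
      rw [← norm_graphEmbedding_of_apply_eq_zero d h hker.2]
      exact norm_add_le _ _
    _ ≤ ‖u‖ + ‖wh‖ + ‖G wh‖ := by gcongr; exact hPi.trans (norm_sub_le u wh)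
    _ ≤ ‖G u‖ + ‖G wh‖ + ‖G wh‖ := by gcongr <;> apply norm_le_norm_graphEmbedding
    _ ≤ ‖G u‖ + ‖d u‖ / β + ‖d u‖ / β := by gcongr
    _ = ‖G u‖ + 2 / β * ‖d u‖ := by ring

/-- Graph-norm stability of the minimizing commuting projection under the discrete
inf-sup condition in the graph norm (proof of Lemma 6.5). -/
theorem minimizing_commuting_projection_graph_stability
    {V W : Type*} [NormedAddCommGroup V] [InnerProductSpace ℝ V]
    [NormedAddCommGroup W] [InnerProductSpace ℝ W]
    [FiniteDimensional ℝ V] [FiniteDimensional ℝ W]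
    (d : V →ₗ[ℝ] W) (Vh : Submodule ℝ V) (Wh : Submodule ℝ W)
    (hdVh : ∀ vh ∈ Vh, d vh ∈ Wh)
    (hPd : ∀ u : V, ((Wh.orthogonalProjection (d u) : W)) ∈ d '' (Vh : Set V))
    (h β : ℝ) (hh : 0 < h) (hβ : 0 < β)
    -- discrete inf-sup condition in the graph norm
    (hIS : ∀ t ∈ d '' (Vh : Set V), t ≠ 0 →
      ∃ vh ∈ Vh, vh ≠ 0 ∧ ⟪t, d vh⟫ ≥
        β * (‖t‖ * Real.sqrt (‖vh‖ ^ 2 + h ^ 2 * ‖d vh‖ ^ 2)))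
    (Pi : V → V)
    -- `Pi u` is the minimizer of `‖u - vh‖` over `{vh ∈ Vh : d vh = P (d u)}`
    (hmem : ∀ u : V, Pi u ∈ Vh)
    (hconstraint : ∀ u : V, d (Pi u) = (Wh.orthogonalProjection (d u) : W))
    (hminimal : ∀ u : V, ∀ vh ∈ Vh, d vh = (Wh.orthogonalProjection (d u) : W) →
      ‖u - Pi u‖ ≤ ‖u - vh‖) :
    ∀ u : V, Real.sqrt (‖Pi u‖ ^ 2 + h ^ 2 * ‖d (Pi u)‖ ^ 2) ≤
      Real.sqrt (‖u‖ ^ 2 + h ^ 2 * ‖d u‖ ^ 2) + (2 / β) * ‖d u‖ :=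
  minimizing_commuting_projection_graph_stability_general d Vh Wh h β hβ hIS Pi hmem hconstraint
    hminimal
end

section
/- Let V, W be real inner product spaces, d : V → W linear, Vₕ ⊆ V finite-dimensional. For uₕ ∈ Vₕ orthogonal to ker(d) ∩ Vₕ, suppose there exists z ∈ V orthogonal to ker(d) with d z = d uₕ, and a projection Πₕ : V → Vₕ with d(Πₕ v) = Q(d v) for a projection Q fixing d(Vₕ) pointwise. Then uₕ − Πₕ(z) ∈ ker(d) ∩ Vₕ, and consequently ‖uₕ‖² = ⟨uₕ, Πₕ(z)⟩, so ‖uₕ‖ ≤ ‖Πₕ(z)‖. -/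
open scoped RealInnerProductSpace

/-- The duality trick in the fractional-order Sobolev stability argument
(Remark 6.5/6.6): `uh - Πh z` lies in the discrete kernel, whence
`‖uh‖² = ⟪uh, Πh z⟫` and `‖uh‖ ≤ ‖Πh z‖`. -/
theorem duality_trick_discrete_kernel
    {V W : Type*} [NormedAddCommGroup V] [InnerProductSpace ℝ V]
    [NormedAddCommGroup W] [InnerProductSpace ℝ W]
    (d : V →ₗ[ℝ] W) (Vh : Submodule ℝ V) [FiniteDimensional ℝ Vh]
    (uh : V) (huh : uh ∈ Vh)
    (horthh : ∀ vh ∈ Vh, d vh = 0 → ⟪uh, vh⟫ = 0)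
    (z : V) (hz : d z = d uh)
    (hzorth : ∀ v : V, d v = 0 → ⟪z, v⟫ = 0)
    (Pih : V →ₗ[ℝ] V) (Q : W →ₗ[ℝ] W)
    (hPihrange : ∀ v : V, Pih v ∈ Vh) (hPihproj : ∀ vh ∈ Vh, Pih vh = vh)
    (hQfix : ∀ w ∈ d '' (Vh : Set V), Q w = w)
    (hcommute : ∀ v : V, d (Pih v) = Q (d v)) :
    (uh - Pih z ∈ Vh ∧ d (uh - Pih z) = 0) ∧
      ‖uh‖ ^ 2 = ⟪uh, Pih z⟫ ∧ ‖uh‖ ≤ ‖Pih z‖ := by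
  have hmem : uh - Pih z ∈ Vh := Vh.sub_mem huh (hPihrange z)
  have hker : d (uh - Pih z) = 0 := by
    have h1 : d (Pih z) = d uh := by
      rw [hcommute, hz, hQfix (d uh) ⟨uh, huh, rfl⟩]
    rw [map_sub, h1, sub_self]
  have horth : ⟪uh, uh - Pih z⟫ = 0 := horthh _ hmem hker
  have heq : ‖uh‖ ^ 2 = ⟪uh, Pih z⟫ := by
    have := inner_sub_right (𝕜 := ℝ) uh uh (Pih z)
    rw [this, real_inner_self_eq_norm_sq] at horth
    linarith
  refine ⟨⟨hmem, hker⟩, heq, ?_⟩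
  have hcs := real_inner_le_norm uh (Pih z)
  nlinarith [norm_nonneg uh, norm_nonneg (Pih z), sq_nonneg (‖uh‖ - ‖Pih z‖)]
end
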